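/- arXiv:2307.08855 — 2 statements merged into one kernel-verified Lean document; each statement's English description precedes it below -/
import Mathlib

section
/- With Ω, η, ψ, and K as in the boundary-localized convolution setup, for every u ∈ C⁰(closure(Ω)) one has sup_{x ∈ Ω} |K_δ u(x) − u(x)| → 0 as δ → 0, where K_δ u(x) := ∫_Ω (δη(x))^{−d} ψ(|y−x|/(δη(x))) u(y) dy for δ ∈ (0,1]. -/
/-!
With `c = δ η(x) ≤ η(x) < dist(x, ∂Ω)`, the rescaled kernel `c⁻ᵈ ψ(‖· - x‖ / c)` is nonnegative,
has mass one and is supported in the ball `B(x, c) ⊆ Ω`, so `K_δ u(x) - u(x)` is an average of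
`u(y) - u(x)` over `‖y - x‖ < c`. Since `η(x) ≤ dist(x, ∂Ω) ≤ diam Ω`, we have `c ≤ δ diam Ω`
uniformly in `x`, and the uniform continuity of `u` on the compact set `closure Ω` concludes.
-/

open MeasureTheory Metric Module Set

theorem ball_infDist_frontier_subset {E : Type*} [NormedAddCommGroup E] [NormedSpace ℝ E]
    [FiniteDimensional ℝ E] {s : Set E} {x : E} (hx : x ∈ s) :
    ball x (infDist x (frontier s)) ⊆ s := by
  rcases eq_or_ne s univ with rfl | hs
  · exact subset_univ _
  obtain ⟨y, hy, hxy⟩ := exists_mem_frontier_infDist_compl_eq_dist hx hs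
  refine (ball_subset_ball ?_).trans ball_infDist_compl_subset
  rw [hxy]
  exact infDist_le_dist_of_mem hy

theorem infDist_frontier_le_diam {α : Type*} [PseudoMetricSpace α] {s : Set α}
    (hs : Bornology.IsBounded s) {x : α} (hx : x ∈ s) : infDist x (frontier s) ≤ diam s := by
  rcases (frontier s).eq_empty_or_nonempty with h | ⟨y, hy⟩
  · rw [h, infDist_empty]
    exact diam_nonneg
  calc infDist x (frontier s) ≤ dist x y := infDist_le_dist_of_mem hy
    _ ≤ diam (closure s) :=
      dist_le_diam_of_mem hs.closure (subset_closure hx) (frontier_subset_closure hy)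
    _ = diam s := diam_closure s

theorem abs_integral_mul_sub_le {α : Type*} [MeasurableSpace α] {μ : Measure α} {g u : α → ℝ}
    {a ε : ℝ} (hg0 : ∀ y, 0 ≤ g y) (hg1 : ∫ y, g y ∂μ = 1)
    (hgu : Integrable (fun y => g y * u y) μ) (hclose : ∀ᵐ y ∂μ, g y ≠ 0 → |u y - a| ≤ ε) :
    |∫ y, g y * u y ∂μ - a| ≤ ε := by
  have hg : Integrable g μ := Integrable.of_integral_ne_zero (by rw [hg1]; exact one_ne_zero)
  have hgua : Integrable (fun y => g y * (u y - a)) μ :=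
    (hgu.sub (hg.mul_const a)).congr
      (Filter.Eventually.of_forall fun y => (mul_sub (g y) (u y) a).symm)
  have hpointwise : ∀ᵐ y ∂μ, |g y * (u y - a)| ≤ g y * ε := by
    filter_upwards [hclose] with y hy
    rw [abs_mul, abs_of_nonneg (hg0 y)]
    rcases eq_or_ne (g y) 0 with h | h
    · simp [h]
    · exact mul_le_mul_of_nonneg_left (hy h) (hg0 y)
  calc |∫ y, g y * u y ∂μ - a| = |∫ y, g y * (u y - a) ∂μ| := by
        simp only [mul_sub]
        rw [integral_sub hgu (hg.mul_const a), integral_mul_const, hg1, one_mul]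
    _ ≤ ∫ y, |g y * (u y - a)| ∂μ := abs_integral_le_integral_abs
    _ ≤ ∫ y, g y * ε ∂μ := integral_mono_ae hgua.abs (hg.mul_const ε) hpointwise
    _ = ε := by rw [integral_mul_const, hg1, one_mul]

section RadialKernel

variable {E : Type*} [NormedAddCommGroup E] [NormedSpace ℝ E]

noncomputable def radialKernel (ψ : ℝ → ℝ) (x : E) (c : ℝ) (y : E) : ℝ :=
  (c ^ finrank ℝ E)⁻¹ * ψ (‖y - x‖ / c)

variable {ψ : ℝ → ℝ} {x y : E} {c : ℝ}

theorem radialKernel_nonneg (hψ0 : ∀ t, 0 ≤ ψ t) (hc : 0 ≤ c) : 0 ≤ radialKernel ψ x c y :=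
  mul_nonneg (by positivity) (hψ0 _)

theorem dist_lt_of_radialKernel_ne_zero (hψs : Function.support ψ ⊆ Iio 1) (hc : 0 < c)
    (h : radialKernel ψ x c y ≠ 0) : dist y x < c := by
  rw [dist_eq_norm, ← div_lt_one hc]
  exact hψs (right_ne_zero_of_mul h)

theorem radialKernel_eq_smul (hc : 0 < c) :
    radialKernel ψ x c y = (c ^ finrank ℝ E)⁻¹ * ψ ‖c⁻¹ • (y - x)‖ := by
  rw [radialKernel, norm_smul, Real.norm_of_nonneg (inv_nonneg.2 hc.le), div_eq_inv_mul]

variable [MeasurableSpace E] [BorelSpace E] [FiniteDimensional ℝ E] {μ : Measure E}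
  [μ.IsAddHaarMeasure]

theorem integral_radialKernel (hc : 0 < c) :
    ∫ y, radialKernel ψ x c y ∂μ = ∫ y, ψ ‖y‖ ∂μ := by
  simp only [radialKernel_eq_smul hc]
  rw [integral_const_mul, integral_sub_right_eq_self (fun y => ψ ‖c⁻¹ • y‖),
    Measure.integral_comp_smul μ (fun y => ψ ‖y‖), smul_eq_mul, inv_pow, inv_inv,
    abs_of_pos (by positivity), inv_mul_cancel_left₀ (by positivity)]

theorem integrable_radialKernel (hψ : Integrable (fun y => ψ ‖y‖) μ) (hc : 0 < c) :
    Integrable (radialKernel ψ x c) μ :=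
  (((hψ.comp_smul (inv_ne_zero hc.ne')).comp_sub_right x).const_mul _).congr
    (Filter.Eventually.of_forall fun _ => (radialKernel_eq_smul hc).symm)

theorem abs_setIntegral_radialKernel_mul_sub_le (hψ0 : ∀ t, 0 ≤ ψ t)
    (hψs : Function.support ψ ⊆ Iio 1) (hψ1 : ∫ y, ψ ‖y‖ ∂μ = 1) {s : Set E}
    (hs : MeasurableSet s) (hc : 0 < c) (hball : ball x c ⊆ s) {u : E → ℝ} {C ε : ℝ}
    (hum : AEStronglyMeasurable u (μ.restrict s)) (hub : ∀ y ∈ s, ‖u y‖ ≤ C)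
    (hclose : ∀ y ∈ s, dist y x < c → |u y - u x| ≤ ε) :
    |∫ y in s, radialKernel ψ x c y * u y ∂μ - u x| ≤ ε := by
  have hψi : Integrable (fun y => ψ ‖y‖) μ :=
    Integrable.of_integral_ne_zero (by rw [hψ1]; exact one_ne_zero)
  have hvanish : ∀ y ∉ s, radialKernel ψ x c y = 0 := fun y hy => by
    by_contra h
    exact hy (hball (dist_lt_of_radialKernel_ne_zero hψs hc h))
  have hmass : ∫ y in s, radialKernel ψ x c y ∂μ = 1 := by
    rw [setIntegral_eq_integral_of_forall_compl_eq_zero hvanish, integral_radialKernel hc, hψ1]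
  refine abs_integral_mul_sub_le (fun _ => radialKernel_nonneg hψ0 hc.le) hmass
    ((integrable_radialKernel hψi hc).integrableOn.mul_bdd hum (ae_restrict_of_forall_mem hs hub))
    (ae_restrict_of_forall_mem hs fun y hy h => ?_)
  exact hclose y hy (dist_lt_of_radialKernel_ne_zero hψs hc h)

end RadialKernel

theorem stmt_5_general (d : ℕ) (Ω : Set (EuclideanSpace ℝ (Fin d)))
    (hΩo : IsOpen Ω) (hΩb : Bornology.IsBounded Ω)
    (η : EuclideanSpace ℝ (Fin d) → ℝ)
    (hηpos : ∀ x ∈ Ω, 0 < η x)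
    (hηd : ∀ x ∈ Ω, η x ≤ infDist x (frontier Ω) / 3)
    (ψ : ℝ → ℝ) (hψ0 : ∀ t, 0 ≤ ψ t)
    (hψs : Function.support ψ ⊆ Set.Ioo (-1) 1)
    (hψ1 : ∫ x : EuclideanSpace ℝ (Fin d), ψ ‖x‖ = 1)
    (u : EuclideanSpace ℝ (Fin d) → ℝ) (hu : ContinuousOn u (closure Ω)) :
    ∀ ε : ℝ, 0 < ε → ∃ δ₀ : ℝ, 0 < δ₀ ∧ δ₀ ≤ 1 ∧
      ∀ δ : ℝ, 0 < δ → δ ≤ δ₀ → ∀ x ∈ Ω,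
        |(∫ y in Ω, ((δ * η x) ^ d)⁻¹ * ψ (‖y - x‖ / (δ * η x)) * u y) - u x| < ε := by
  intro ε hε
  have hcpt := hΩb.isCompact_closure
  obtain ⟨C, hC⟩ := hcpt.exists_bound_of_continuousOn hu
  obtain ⟨r, hr, hur⟩ := Metric.uniformContinuousOn_iff.1
    (hcpt.uniformContinuousOn_of_continuous hu) (ε / 2) (half_pos hε)
  have hD : 0 ≤ diam Ω := diam_nonneg
  refine ⟨min 1 (r / (diam Ω + 1)), by positivity, min_le_left _ _, fun δ hδ hδ₀ x hx => ?_⟩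
  have hηx := hηpos x hx
  have hηD : η x ≤ diam Ω := by linarith [hηd x hx, infDist_frontier_le_diam hΩb hx]
  have hball : ball x (δ * η x) ⊆ Ω := by
    refine (ball_subset_ball ?_).trans (ball_infDist_frontier_subset hx)
    nlinarith [hηd x hx, hδ₀.trans (min_le_left _ _)]
  have hcr : δ * η x < r := calc
    δ * η x ≤ r / (diam Ω + 1) * diam Ω :=
      mul_le_mul (hδ₀.trans (min_le_right _ _)) hηD hηx.le (by positivity)
    _ < r := by
      rw [div_mul_eq_mul_div, div_lt_iff₀ (by positivity)]
      nlinarith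
  have hkernel : ∀ y, ((δ * η x) ^ d)⁻¹ * ψ (‖y - x‖ / (δ * η x)) = radialKernel ψ x (δ * η x) y :=
    fun y => by rw [radialKernel, finrank_euclideanSpace_fin]
  simp only [hkernel]
  refine (abs_setIntegral_radialKernel_mul_sub_le hψ0 (hψs.trans Ioo_subset_Iio_self) hψ1
    hΩo.measurableSet (mul_pos hδ hηx) hball
    ((hu.mono subset_closure).aestronglyMeasurable hΩo.measurableSet)
    (fun y hy => hC y (subset_closure hy)) fun y hy hyx => ?_).trans_lt (half_lt_self hε)
  exact (hur y (subset_closure hy) x (subset_closure hx) (hyx.trans hcr)).le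

/-- Uniform convergence of the boundary-localized mollification `K_δ u` to `u` on `Ω`
as the bulk horizon parameter `δ ∈ (0,1]` tends to `0`:
`sup_{x ∈ Ω} |K_δ u(x) - u(x)| → 0` as `δ → 0`. -/
theorem stmt_5 (d : ℕ) (hd : 1 ≤ d) (Ω : Set (EuclideanSpace ℝ (Fin d)))
    (hΩo : IsOpen Ω) (hΩb : Bornology.IsBounded Ω)
    (η : EuclideanSpace ℝ (Fin d) → ℝ) (hηc : ContinuousOn η (closure Ω))
    (hηpos : ∀ x ∈ Ω, 0 < η x) (hη0 : ∀ x ∈ frontier Ω, η x = 0)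
    (hηd : ∀ x ∈ Ω, η x ≤ infDist x (frontier Ω) / 3)
    (ψ : ℝ → ℝ) (hψc : Continuous ψ) (hψ0 : ∀ t, 0 ≤ ψ t)
    (hψs : Function.support ψ ⊆ Set.Ioo (-1) 1)
    (hψ1 : ∫ x : EuclideanSpace ℝ (Fin d), ψ ‖x‖ = 1)
    (u : EuclideanSpace ℝ (Fin d) → ℝ) (hu : ContinuousOn u (closure Ω)) :
    ∀ ε : ℝ, 0 < ε → ∃ δ₀ : ℝ, 0 < δ₀ ∧ δ₀ ≤ 1 ∧
      ∀ δ : ℝ, 0 < δ → δ ≤ δ₀ → ∀ x ∈ Ω,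
        |(∫ y in Ω, ((δ * η x) ^ d)⁻¹ * ψ (‖y - x‖ / (δ * η x)) * u y) - u x| < ε :=
  stmt_5_general d Ω hΩo hΩb η hηpos hηd ψ hψ0 hψs hψ1 u hu
end

section
/- Let Ω ⊂ ℝ^d be open, let η_δ : Ω → (0,∞) be Lipschitz with constant κ₁δ < 1 and satisfy B(x, η_δ(x)) ⊂ Ω for all x ∈ Ω, and let ψ : ℝ → [0,∞) be bounded with support in (−1,1). Define ψ_δ(y,x) := η_δ(y)^{−d} ψ(|x−y|/η_δ(y)) and Ψ_δ(x) := ∫_Ω ψ_δ(y,x) dy. Then there is a constant C depending only on d, ‖ψ‖_∞, and κ₁δ such that Ψ_δ(x) ≤ C for all x ∈ Ω. -/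
/-!
Where the kernel does not vanish, `‖x - y‖ < η(y)`, so the Lipschitz bound makes `η(y)`
comparable to `η(x)`: `η(x)/(1+κ) ≤ η(y) ≤ η(x)/(1-κ)`. Hence the integrand is at most
`‖ψ‖_∞ ((1+κ)/η(x))^d` on the ball of radius `η(x)/(1-κ)` about `x` and vanishes off it; the
volume of that ball is `η(x)^d/(1-κ)^d` times that of the unit ball, so the powers of `η(x)` cancel.
-/

open MeasureTheory Metric

theorem setIntegral_le_mul_measureReal_of_le_indicator {α : Type*} [MeasurableSpace α]
    {μ : Measure α} {s t : Set α} {f : α → ℝ} {K : ℝ} (hs : MeasurableSet s)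
    (ht : MeasurableSet t) (htμ : μ t ≠ ⊤) (hK : 0 ≤ K) (hf0 : ∀ y ∈ s, 0 ≤ f y)
    (hf : ∀ y ∈ s, f y ≤ t.indicator (fun _ => K) y) :
    ∫ y in s, f y ∂μ ≤ K * μ.real t := by
  have hg : Integrable (t.indicator fun _ => K) μ :=
    (integrable_indicator_iff ht).2 (integrableOn_const htμ)
  calc ∫ y in s, f y ∂μ ≤ ∫ y in s, t.indicator (fun _ => K) y ∂μ :=
        integral_mono_of_nonneg (ae_restrict_of_forall_mem hs hf0) hg.restrict
          (ae_restrict_of_forall_mem hs hf)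
    _ ≤ ∫ y, t.indicator (fun _ => K) y ∂μ :=
        setIntegral_le_integral hg (ae_of_all _ fun _ => Set.indicator_nonneg (fun _ _ => hK) _)
    _ = K * μ.real t := by rw [integral_indicator_const K ht, smul_eq_mul, mul_comm]

theorem div_one_add_le_and_le_div_one_sub {a b t κ : ℝ} (hκ0 : 0 ≤ κ) (hκ1 : κ < 1)
    (hab : |a - b| ≤ κ * t) (htb : t ≤ b) : a / (1 + κ) ≤ b ∧ b ≤ a / (1 - κ) := by
  have hκt : κ * t ≤ κ * b := mul_le_mul_of_nonneg_left htb hκ0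
  rw [abs_le] at hab
  constructor
  · rw [div_le_iff₀ (by linarith)]; linarith
  · rw [le_div_iff₀ (by linarith)]; linarith

theorem kernel_le_indicator_closedBall {E : Type*} [NormedAddCommGroup E] {η : E → ℝ}
    {ψ : ℝ → ℝ} {κ M : ℝ} {x y : E} (n : ℕ) (hκ0 : 0 ≤ κ) (hκ1 : κ < 1)
    (hηx : 0 < η x) (hηy : 0 < η y) (hlip : |η x - η y| ≤ κ * ‖x - y‖)
    (hψ0 : ∀ t, 0 ≤ ψ t) (hψb : ∀ t, ψ t ≤ M) (hψs : Function.support ψ ⊆ Set.Ioo (-1) 1) :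
    (η y ^ n)⁻¹ * ψ (‖x - y‖ / η y) ≤
      (closedBall x (η x / (1 - κ))).indicator (fun _ => M * ((1 + κ) / η x) ^ n) y := by
  by_cases hzero : ψ (‖x - y‖ / η y) = 0
  · rw [hzero, mul_zero]
    exact Set.indicator_nonneg (fun _ _ => by have := (hψ0 0).trans (hψb 0); positivity) y
  have hxy : ‖x - y‖ < η y := (div_lt_one hηy).1 (hψs hzero).2
  obtain ⟨hlower, hupper⟩ := div_one_add_le_and_le_div_one_sub hκ0 hκ1 hlip hxy.le
  have hy : y ∈ closedBall x (η x / (1 - κ)) := by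
    rw [mem_closedBall, dist_eq_norm, norm_sub_rev]
    exact hxy.le.trans hupper
  have hinv : (η y ^ n)⁻¹ ≤ ((1 + κ) / η x) ^ n := by
    rw [← inv_pow]
    refine pow_le_pow_left₀ (inv_nonneg.2 hηy.le) ?_ n
    simpa only [inv_div] using inv_anti₀ (by positivity) hlower
  rw [Set.indicator_of_mem hy, mul_comm M]
  exact mul_le_mul hinv (hψb _) (hψ0 _) (by positivity)

theorem stmt_7_general (d : ℕ) (Ω : Set (EuclideanSpace ℝ (Fin d)))
    (hΩo : IsOpen Ω)
    (η : EuclideanSpace ℝ (Fin d) → ℝ) (κδ : ℝ) (hκδ0 : 0 < κδ) (hκδ1 : κδ < 1)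
    (hηpos : ∀ x ∈ Ω, 0 < η x)
    (hlip : ∀ x ∈ Ω, ∀ y ∈ Ω, |η x - η y| ≤ κδ * ‖x - y‖)
    (ψ : ℝ → ℝ) (Mψ : ℝ) (hψ0 : ∀ t, 0 ≤ ψ t)
    (hψb : ∀ t, ψ t ≤ Mψ)
    (hψs : Function.support ψ ⊆ Set.Ioo (-1) 1) :
    ∃ C : ℝ, 0 < C ∧ ∀ x ∈ Ω,
      (∫ y in Ω, ((η y) ^ d)⁻¹ * ψ (‖x - y‖ / η y)) ≤ C := by
  have hM : 0 ≤ Mψ := (hψ0 0).trans (hψb 0)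
  have hκ : 0 < 1 - κδ := by linarith
  set B := volume.real (closedBall (0 : EuclideanSpace ℝ (Fin d)) 1)
  refine ⟨Mψ * ((1 + κδ) / (1 - κδ)) ^ d * B + 1, by positivity, fun x hx => ?_⟩
  have hηx := hηpos x hx
  calc ∫ y in Ω, (η y ^ d)⁻¹ * ψ (‖x - y‖ / η y)
      ≤ Mψ * ((1 + κδ) / η x) ^ d * volume.real (closedBall x (η x / (1 - κδ))) :=
        setIntegral_le_mul_measureReal_of_le_indicator hΩo.measurableSet measurableSet_closedBall
          measure_closedBall_lt_top.ne (by positivity)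
          (fun y hy => by have := hηpos y hy; have := hψ0 (‖x - y‖ / η y); positivity)
          (fun y hy => kernel_le_indicator_closedBall d hκδ0.le hκδ1 hηx (hηpos y hy)
            (hlip x hx y hy) hψ0 hψb hψs)
    _ = Mψ * ((1 + κδ) / (1 - κδ)) ^ d * B := by
        rw [Measure.addHaar_real_closedBall' _ _ (by positivity), finrank_euclideanSpace_fin,
          ← mul_assoc _ (_ ^ d), mul_assoc Mψ, ← mul_pow, div_mul_div_cancel₀ hηx.ne']
    _ ≤ Mψ * ((1 + κδ) / (1 - κδ)) ^ d * B + 1 := le_add_of_nonneg_right zero_le_one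

/-- Uniform bound on the reversed-argument kernel mass
`Ψ_δ(x) = ∫_Ω η_δ(y)^{-d} ψ(|x-y|/η_δ(y)) dy`: there exists a constant `C`
(depending only on `d`, `‖ψ‖_∞` and the Lipschitz constant `κ₁δ < 1` of `η_δ`)
such that `Ψ_δ(x) ≤ C` for all `x ∈ Ω`. -/
theorem stmt_7 (d : ℕ) (hd : 1 ≤ d) (Ω : Set (EuclideanSpace ℝ (Fin d)))
    (hΩo : IsOpen Ω)
    (η : EuclideanSpace ℝ (Fin d) → ℝ) (κδ : ℝ) (hκδ0 : 0 < κδ) (hκδ1 : κδ < 1)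
    (hηpos : ∀ x ∈ Ω, 0 < η x)
    (hball : ∀ x ∈ Ω, ball x (η x) ⊆ Ω)
    (hlip : ∀ x ∈ Ω, ∀ y ∈ Ω, |η x - η y| ≤ κδ * ‖x - y‖)
    (ψ : ℝ → ℝ) (Mψ : ℝ) (hψm : Measurable ψ) (hψ0 : ∀ t, 0 ≤ ψ t)
    (hψb : ∀ t, ψ t ≤ Mψ)
    (hψs : Function.support ψ ⊆ Set.Ioo (-1) 1) :
    ∃ C : ℝ, 0 < C ∧ ∀ x ∈ Ω,
      (∫ y in Ω, ((η y) ^ d)⁻¹ * ψ (‖x - y‖ / η y)) ≤ C :=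
  stmt_7_general d Ω hΩo η κδ hκδ0 hκδ1 hηpos hlip ψ Mψ hψ0 hψb hψs
end
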